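/- Let P₁, …, P₆ be six points in the Euclidean plane such that P₄, P₅, P₆ are collinear, P₁, P₄, P₂ are collinear, P₁, P₅, P₃ are collinear, and P₂, P₃, P₆ are collinear. Let M₂₅ be the midpoint of P₂P₅, M₆₁ the midpoint of P₆P₁, and M₄₃ the midpoint of P₄P₃. Let R₁₅₃ be the common radical center of the circumcircles of triangles P₁M₂₅M₄₃, P₅M₆₁M₄₃ and P₃M₆₁M₂₅; let R₁₄₂ be the radical center of the circumcircles of P₁M₂₅M₄₃, P₄M₂₅M₆₁ and P₂M₆₁M₄₃; let R₂₃₆ be the radical center of the circumcircles of P₂M₆₁M₄₃, P₃M₆₁M₂₅ and P₆M₂₅M₄₃; and let R₄₅₆ be the radical center of the circumcircles of P₄M₂₅M₆₁, P₅M₆₁M₄₃ and P₆M₂₅M₄₃ (each of these triangles assumed nondegenerate and each radical center assumed to exist uniquely). If M₆₁ lies on the line R₄₅₆R₁₅₃, then M₆₁ is the intersection point of lines R₄₅₆R₁₅₃ and R₁₄₂R₂₃₆, and M₂₅ is the intersection point of lines R₁₅₃R₁₄₂ and R₂₃₆R₄₅₆. -/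

import Mathlib

/-!
The midpoints M₂₅, M₄₃, M₆₁ lie on the Newton–Gauss line; write M₆₁ = lineMap M₂₅ M₄₃ t. Each of
the six circles meets this line in two of the midpoints, which determines its power along the line.
The difference of the power functions of two circles is affine with gradient 2 (O' - O), so their
radical axis is a line unless the two power functions agree.

The radical axes of circles 2, 3 and of circles 2, 4 pass through M₆₁, so the hypothesis puts R₄₅₆
on the first and R₁₅₃ on the second. Then M₂₅, M₆₁ and R₁₅₃ are non-collinear points of equal power
for circles 3 and 4, so these circles coincide. Hence P₄ lies on circle 3, so the midpoint M₄₃ of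
the chord P₄P₃ is inside it, which forces t > 1.

With circle 4 replaced by circle 3, every radical centre has equal powers for circle 3 and two of
the circles 1, 2, 5, 6, and each claimed incidence says that a midpoint lies on the radical axis of
circle 3 with one of them, which is spanned by two of the radical centres. These are distinct: a
common point would lie on the Gauss line, the radical axis of circles 1, 6 and of circles 2, 5
(which differ, by uniqueness of R₄₅₆ and since t > 1), and have equal powers for circles 3 and 5;
the only such point is M₆₁, which is none of the radical centres.
-/

open EuclideanGeometry Metric

noncomputable section

/-- The Euclidean plane. -/
abbrev Pt := EuclideanSpace ℝ (Fin 2)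

/-- The incenter of a nondegenerate triangle, as the weighted average of the
vertices with weights the opposite side lengths. -/
def sIncenter (A B C : Pt) : Pt :=
  (dist B C + dist C A + dist A B)⁻¹ •
    (dist B C • A + dist C A • B + dist A B • C)

/-- The inradius of a nondegenerate triangle: the distance from the incenter
to the side line `BC`. -/
def sInradius (A B C : Pt) : ℝ :=
  Metric.infDist (sIncenter A B C) (affineSpan ℝ {B, C} : Set Pt)

/-- `O` is the circumcenter of triangle `ABC` with circumradius `R`,
i.e. all three vertices lie on the circle with center `O` and radius `R`. -/
def IsCircumcircle (O : Pt) (R : ℝ) (A B C : Pt) : Prop :=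
  dist A O = R ∧ dist B O = R ∧ dist C O = R

/-- `H` is the orthocenter of triangle `ABC` (it lies on the altitudes). -/
def IsOrthocenter (H A B C : Pt) : Prop :=
  inner ℝ (H - A) (B - C) = (0:ℝ) ∧ inner ℝ (H - B) (C - A) = (0:ℝ)

/-- Power of a point `P` w.r.t. the circle with center `O` and radius `r`. -/
def power (P O : Pt) (r : ℝ) : ℝ := dist P O ^ 2 - r ^ 2

/-- The circle with center `O` and radius `r` is tangent to the line `AB`. -/
def TangentToLine (O : Pt) (r : ℝ) (A B : Pt) : Prop :=
  Metric.infDist O (affineSpan ℝ {A, B} : Set Pt) = r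

open AffineMap Module

theorem collinear_of_inner_vsub_eq_zero {V P : Type*} [NormedAddCommGroup V]
    [InnerProductSpace ℝ V] [MetricSpace P] [NormedAddTorsor V P] (hV : finrank ℝ V = 2)
    {s : Set P} {w : V} {p₀ : P} (hw : w ≠ 0) (h : ∀ p ∈ s, inner ℝ w (p -ᵥ p₀) = 0) :
    Collinear ℝ s := by
  have : Fact (finrank ℝ V = 1 + 1) := ⟨hV⟩
  have : FiniteDimensional ℝ V := .of_fact_finrank_eq_succ 1
  rw [collinear_iff_finrank_le_one,
    ← Submodule.finrank_orthogonal_span_singleton (𝕜 := ℝ) (n := 1) hw]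
  refine Submodule.finrank_mono ?_
  rw [vectorSpan_def, Submodule.span_le]
  rintro _ ⟨p, hp, q, hq, rfl⟩
  rw [SetLike.mem_coe, Submodule.mem_orthogonal_singleton_iff_inner_right]
  change inner ℝ w (p -ᵥ q) = 0
  rw [← vsub_sub_vsub_cancel_right p q p₀, inner_sub_right, h p hp, h q hq, sub_zero]

theorem cross_eq_zero_of_collinear {A B C : Pt} (h : Collinear ℝ {A, B, C}) :
    (B 0 - A 0) * (C 1 - A 1) - (B 1 - A 1) * (C 0 - A 0) = 0 := by
  obtain ⟨v, hv⟩ := (collinear_iff_of_mem (p₀ := A) (by simp)).1 h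
  obtain ⟨b, rfl⟩ := hv B (by simp)
  obtain ⟨c, rfl⟩ := hv C (by simp)
  simp only [vadd_eq_add, PiLp.add_apply, PiLp.smul_apply, smul_eq_mul]
  ring

theorem collinear_of_cross_eq_zero {A B C : Pt}
    (h : (B 0 - A 0) * (C 1 - A 1) - (B 1 - A 1) * (C 0 - A 0) = 0) :
    Collinear ℝ {A, B, C} := by
  rcases eq_or_ne A B with rfl | hAB
  · simpa using collinear_pair ℝ A C
  have hw : !₂[-(B 1 - A 1), B 0 - A 0] ≠ 0 := fun hw ↦ hAB <| by
    have h0 : -(B 1 - A 1) = 0 := congrArg (· 0) hw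
    have h1 : B 0 - A 0 = 0 := congrArg (· 1) hw
    ext i; fin_cases i <;> simp <;> linarith
  refine collinear_of_inner_vsub_eq_zero finrank_euclideanSpace_fin hw (p₀ := A) ?_
  simp only [Set.mem_insert_iff, Set.mem_singleton_iff]
  rintro p (rfl | rfl | rfl) <;> simp [PiLp.inner_apply, Fin.sum_univ_two] <;> linarith

theorem collinear_midpoint_diagonals {P₁ P₂ P₃ P₄ P₅ P₆ : Pt}
    (h456 : Collinear ℝ {P₄, P₅, P₆}) (h142 : Collinear ℝ {P₁, P₄, P₂})
    (h153 : Collinear ℝ {P₁, P₅, P₃}) (h236 : Collinear ℝ {P₂, P₃, P₆}) :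
    Collinear ℝ {midpoint ℝ P₂ P₅, midpoint ℝ P₄ P₃, midpoint ℝ P₆ P₁} := by
  apply collinear_of_cross_eq_zero
  simp only [midpoint_eq_smul_add, invOf_eq_inv, PiLp.smul_apply, PiLp.add_apply, smul_eq_mul]
  linear_combination (cross_eq_zero_of_collinear h153 + cross_eq_zero_of_collinear h236 -
    cross_eq_zero_of_collinear h456 - cross_eq_zero_of_collinear h142) / 4

theorem power_eq_zero_of_dist_eq {A O : Pt} {r : ℝ} (h : dist A O = r) : power A O r = 0 := by
  rw [power, h, sub_self]

theorem IsCircumcircle.power_fst {O A B C : Pt} {r : ℝ} (h : IsCircumcircle O r A B C) :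
    power A O r = 0 := power_eq_zero_of_dist_eq h.1

theorem IsCircumcircle.power_snd {O A B C : Pt} {r : ℝ} (h : IsCircumcircle O r A B C) :
    power B O r = 0 := power_eq_zero_of_dist_eq h.2.1

theorem IsCircumcircle.power_thd {O A B C : Pt} {r : ℝ} (h : IsCircumcircle O r A B C) :
    power C O r = 0 := power_eq_zero_of_dist_eq h.2.2

theorem power_lineMap (A B O : Pt) (r s : ℝ) :
    power (lineMap A B s) O r =
      (1 - s) * power A O r + s * power B O r - s * (1 - s) * dist A B ^ 2 := by
  have hX : lineMap A B s - O = (1 - s) • (A - O) + s • (B - O) := by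
    rw [lineMap_apply_module]; module
  have hAB : A - B = (A - O) - (B - O) := by abel
  simp only [power, dist_eq_norm, hX, hAB, norm_add_sq_real, norm_sub_sq_real, norm_smul,
    inner_smul_left, inner_smul_right, mul_pow, Real.norm_eq_abs, sq_abs, RCLike.conj_to_real]
  ring

theorem power_sub_power_lineMap (A B O O' : Pt) (r r' s : ℝ) :
    power (lineMap A B s) O r - power (lineMap A B s) O' r' =
      (1 - s) * (power A O r - power A O' r') + s * (power B O r - power B O' r') := by
  rw [power_lineMap, power_lineMap]; ring

theorem power_lineMap_of_power_eq_zero {A B O : Pt} {r a b : ℝ}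
    (ha : power (lineMap A B a) O r = 0) (hb : power (lineMap A B b) O r = 0) (hab : a ≠ b)
    (y : ℝ) : power (lineMap A B y) O r = (y - a) * (y - b) * dist A B ^ 2 := by
  have qa := (power_lineMap A B O r a).symm.trans ha
  have qb := (power_lineMap A B O r b).symm.trans hb
  refine mul_left_cancel₀ (sub_ne_zero.2 hab) ?_
  rw [power_lineMap]
  linear_combination (y - b) * qa - (y - a) * qb

theorem power_midpoint_nonpos {A B O : Pt} {r : ℝ} (hA : power A O r = 0)
    (hB : power B O r = 0) : power (midpoint ℝ A B) O r ≤ 0 := by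
  rw [midpoint, power_lineMap, hA, hB]
  norm_num

theorem power_eq_of_mem_affineSpan_pair {A B Y O O' : Pt} {r r' : ℝ} (hY : Y ∈ line[ℝ, A, B])
    (hA : power A O r = power A O' r') (hB : power B O r = power B O' r') :
    power Y O r = power Y O' r' := by
  obtain ⟨s, rfl⟩ := mem_affineSpan_pair_iff_exists_lineMap_eq.1 hY
  linear_combination power_sub_power_lineMap A B O O' r r' s + (1 - s) * hA + s * hB

theorem power_eq_left_of_mem_affineSpan_pair {A B Y O O' : Pt} {r r' : ℝ}
    (hY : Y ∈ line[ℝ, A, B]) (hYB : Y ≠ B)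
    (hY' : power Y O r = power Y O' r') (hB : power B O r = power B O' r') :
    power A O r = power A O' r' :=
  power_eq_of_mem_affineSpan_pair
    ((collinear_insert_of_mem_affineSpan_pair hY).mem_affineSpan_of_mem_of_ne
      (by simp) (by simp) (by simp) hYB) hY' hB

theorem mem_affineSpan_pair_or_forall_power_eq {A B C O O' : Pt} {r r' : ℝ} (hAB : A ≠ B)
    (hA : power A O r = power A O' r') (hB : power B O r = power B O' r')
    (hC : power C O r = power C O' r') :
    C ∈ line[ℝ, A, B] ∨ ∀ Y, power Y O r = power Y O' r' := by
  have affine (Y : Pt) : (power Y O r - power Y O' r') - (power A O r - power A O' r') =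
      2 * inner ℝ (O' - O) (Y - A) := by
    have h₁ : Y - O = (Y - A) + (A - O) := by abel
    have h₂ : Y - O' = (Y - A) + (A - O) - (O' - O) := by abel
    have h₃ : A - O' = (A - O) - (O' - O) := by abel
    simp only [power, dist_eq_norm, h₁, h₂, h₃, norm_add_sq_real, norm_sub_sq_real,
      inner_add_left, inner_sub_left, inner_sub_right, real_inner_comm]
    ring
  rcases eq_or_ne O O' with rfl | hO
  · refine .inr fun Y ↦ ?_
    have := affine Y
    rw [sub_self, inner_zero_left, mul_zero] at this
    linarith
  · refine .inl <| (collinear_of_inner_vsub_eq_zero finrank_euclideanSpace_fin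
      (sub_ne_zero.2 hO.symm) (s := {A, B, C}) (p₀ := A) ?_).mem_affineSpan_of_mem_of_ne
      (by simp) (by simp) (by simp) hAB
    intro p hp
    have hp' : power p O r = power p O' r' := by rcases hp with rfl | rfl | rfl <;> assumption
    rw [vsub_eq_sub]
    linarith [affine p]

theorem mem_affineSpan_pair_of_power_eq {A B C Y O O' : Pt} {r r' : ℝ} (hAB : A ≠ B)
    (hA : power A O r = power A O' r') (hB : power B O r = power B O' r')
    (hC : power C O r = power C O' r') (hY : power Y O r ≠ power Y O' r') :
    C ∈ line[ℝ, A, B] :=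
  (mem_affineSpan_pair_or_forall_power_eq hAB hA hB hC).resolve_right fun h ↦ hY (h Y)

section Secant

variable {A B O : Pt} {r t : ℝ}

theorem power_lineMap_ne_zero (hA : power A O r = 0) (hB : power B O r = 0) (hAB : A ≠ B)
    (ht₀ : t ≠ 0) (ht₁ : t ≠ 1) : power (lineMap A B t) O r ≠ 0 := by
  rw [power_lineMap, hA, hB, mul_zero, mul_zero, add_zero, zero_sub, neg_ne_zero]
  exact mul_ne_zero (mul_ne_zero ht₀ (sub_ne_zero.2 ht₁.symm)) (pow_ne_zero 2 (dist_ne_zero.2 hAB))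

theorem power_left_eq_mul_dist_sq (hX : power (lineMap A B t) O r = 0) (hB : power B O r = 0)
    (ht₁ : t ≠ 1) : power A O r = t * dist A B ^ 2 := by
  have h := power_lineMap A B O r t
  rw [hX, hB] at h
  refine mul_left_cancel₀ (sub_ne_zero.2 ht₁.symm) ?_
  linear_combination -h

theorem power_right_eq_mul_dist_sq (hX : power (lineMap A B t) O r = 0) (hA : power A O r = 0)
    (ht₀ : t ≠ 0) : power B O r = (1 - t) * dist A B ^ 2 := by
  have h := power_lineMap A B O r t
  rw [hX, hA] at h
  refine mul_left_cancel₀ ht₀ ?_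
  linear_combination -h

theorem power_left_ne_zero (hX : power (lineMap A B t) O r = 0) (hB : power B O r = 0)
    (hAB : A ≠ B) (ht₀ : t ≠ 0) (ht₁ : t ≠ 1) : power A O r ≠ 0 := by
  rw [power_left_eq_mul_dist_sq hX hB ht₁]
  exact mul_ne_zero ht₀ (pow_ne_zero 2 (dist_ne_zero.2 hAB))

theorem one_lt_of_midpoint_eq {P Q : Pt} (hAB : A ≠ B) (ht₀ : t ≠ 0) (ht₁ : t ≠ 1)
    (hX : power (lineMap A B t) O r = 0) (hA : power A O r = 0) (hP : power P O r = 0)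
    (hQ : power Q O r = 0) (hB : B = midpoint ℝ P Q) : 1 < t := by
  have h := power_midpoint_nonpos hP hQ
  rw [← hB, power_right_eq_mul_dist_sq hX hA ht₀] at h
  have : 0 < dist A B ^ 2 := pow_pos (dist_pos.2 hAB) 2
  exact lt_of_le_of_ne (by nlinarith) ht₁.symm

theorem nonpos_of_midpoint_eq {P Q : Pt} (hAB : A ≠ B) (ht₁ : t ≠ 1)
    (hX : power (lineMap A B t) O r = 0) (hB : power B O r = 0) (hP : power P O r = 0)
    (hQ : power Q O r = 0) (hA : A = midpoint ℝ P Q) : t ≤ 0 := by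
  have h := power_midpoint_nonpos hP hQ
  rw [← hA, power_left_eq_mul_dist_sq hX hB ht₁] at h
  have : 0 < dist A B ^ 2 := pow_pos (dist_pos.2 hAB) 2
  nlinarith

theorem eq_lineMap_of_power_eq {O' Y : Pt} {r' : ℝ} (hAB : A ≠ B) (ht₀ : t ≠ 0) (ht₁ : t ≠ 1)
    (hX : power (lineMap A B t) O r = 0) (hA : power A O r = 0)
    (hX' : power (lineMap A B t) O' r' = 0) (hB' : power B O' r' = 0)
    (hY : Y ∈ line[ℝ, A, B]) (h : power Y O r = power Y O' r') : Y = lineMap A B t := by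
  obtain ⟨y, rfl⟩ := mem_affineSpan_pair_iff_exists_lineMap_eq.1 hY
  rw [power_lineMap_of_power_eq_zero hX (a := t) (b := 0) (by simpa using hA) ht₀,
    power_lineMap_of_power_eq_zero hX' (a := t) (b := 1) (by simpa using hB') ht₁] at h
  have : (y - t) * dist A B ^ 2 = 0 := by linear_combination h
  rw [sub_eq_zero.1 ((mul_eq_zero.1 this).resolve_right (pow_ne_zero 2 (dist_ne_zero.2 hAB)))]

end Secant

section SixCircles

/- `A`, `B` and `lineMap A B t` play the roles of M₂₅, M₄₃ and M₆₁, and `Oᵢ`, `Rᵢ` describe the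
`i`-th circle of the theorem. -/

variable {P₁ P₂ P₃ P₄ P₅ P₆ A B O₁ O₂ O₃ O₄ O₅ O₆ R153 R142 R236 R456 : Pt}
  {R₁ R₂ R₃ R₄ R₅ R₆ t : ℝ}

theorem forall_power_eq_of_lineMap_mem_affineSpan_pair (hAB : A ≠ B) (ht₀ : t ≠ 0)
    (ht₁ : t ≠ 1) (hO₁ : IsCircumcircle O₁ R₁ P₁ A B)
    (hO₂ : IsCircumcircle O₂ R₂ P₅ (lineMap A B t) B)
    (hO₃ : IsCircumcircle O₃ R₃ P₃ (lineMap A B t) A)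
    (hO₄ : IsCircumcircle O₄ R₄ P₄ A (lineMap A B t)) (hO₆ : IsCircumcircle O₆ R₆ P₆ A B)
    (hR153a : power R153 O₁ R₁ = power R153 O₂ R₂)
    (hR153b : power R153 O₂ R₂ = power R153 O₃ R₃)
    (hR456a : power R456 O₄ R₄ = power R456 O₂ R₂)
    (hR456b : power R456 O₂ R₂ = power R456 O₆ R₆)
    (hR456U : ∀ Y : Pt, power Y O₄ R₄ = power Y O₂ R₂ →
      power Y O₂ R₂ = power Y O₆ R₆ → Y = R456)
    (hmem : lineMap A B t ∈ line[ℝ, R456, R153]) :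
    (∀ Y, power Y O₃ R₃ = power Y O₄ R₄) ∧ power R456 O₂ R₂ = power R456 O₃ R₃ ∧
      ¬ ∀ Y, power Y O₁ R₁ = power Y O₆ R₆ := by
  have p₁X := power_lineMap_ne_zero hO₁.power_snd hO₁.power_thd hAB ht₀ ht₁
  have hX153 : lineMap A B t ≠ R153 := by
    rintro rfl
    exact p₁X (hR153a.trans hO₂.power_snd)
  have hX456 : lineMap A B t ≠ R456 := by
    rintro rfl
    exact power_lineMap_ne_zero hO₆.power_snd hO₆.power_thd hAB ht₀ ht₁
      (hR456b.symm.trans hO₂.power_snd)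
  have hA153 : A ≠ R153 := by
    rintro rfl
    exact power_left_ne_zero hO₂.power_snd hO₂.power_thd hAB ht₀ ht₁
      (hR153a.symm.trans hO₁.power_snd)
  have e24 : power R153 O₂ R₂ = power R153 O₄ R₄ :=
    power_eq_left_of_mem_affineSpan_pair (by rwa [Set.pair_comm]) hX456
      (hO₂.power_snd.trans hO₄.power_thd.symm) hR456a.symm
  refine ⟨?_, power_eq_left_of_mem_affineSpan_pair hmem hX153
    (hO₂.power_snd.trans hO₃.power_snd.symm) hR153b, fun h ↦ ?_⟩
  · -- The radical axis of circles 1 and 3 passes through A and R153 but not through M₆₁.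
    refine (mem_affineSpan_pair_or_forall_power_eq hA153
      (hO₃.power_thd.trans hO₄.power_snd.symm) (hR153b.symm.trans e24)
      (hO₃.power_snd.trans hO₄.power_thd.symm)).resolve_left fun h ↦ p₁X ?_
    rw [power_eq_of_mem_affineSpan_pair h (hO₁.power_snd.trans hO₃.power_thd.symm)
      (hR153a.trans hR153b), hO₃.power_snd]
  · have h153 : R153 = R456 := hR456U R153 e24.symm (hR153a.symm.trans (h R153))
    rw [← h153, Set.pair_eq_singleton, AffineSubspace.mem_affineSpan_singleton] at hmem
    exact hX153 hmem

theorem eq_lineMap_of_power_eq_of_power_eq {R : Pt} (hAB : A ≠ B) (ht₀ : t ≠ 0) (ht₁ : t ≠ 1)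
    (hO₁ : IsCircumcircle O₁ R₁ P₁ A B) (hO₂ : IsCircumcircle O₂ R₂ P₅ (lineMap A B t) B)
    (hO₃ : IsCircumcircle O₃ R₃ P₃ (lineMap A B t) A)
    (hO₅ : IsCircumcircle O₅ R₅ P₂ (lineMap A B t) B) (hO₆ : IsCircumcircle O₆ R₆ P₆ A B)
    (hN₁₆ : ¬ ∀ Y, power Y O₁ R₁ = power Y O₆ R₆) (hN₂₅ : ¬ ∀ Y, power Y O₂ R₂ = power Y O₅ R₅)
    (h₃₅ : power R O₃ R₃ = power R O₅ R₅)
    (h : power R O₁ R₁ = power R O₆ R₆ ∨ power R O₂ R₂ = power R O₅ R₅) :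
    R = lineMap A B t := by
  refine eq_lineMap_of_power_eq hAB ht₀ ht₁ hO₃.power_snd hO₃.power_thd hO₅.power_snd
    hO₅.power_thd ?_ h₃₅
  rcases h with h₁₆ | h₂₅
  · exact (mem_affineSpan_pair_or_forall_power_eq hAB (hO₁.power_snd.trans hO₆.power_snd.symm)
      (hO₁.power_thd.trans hO₆.power_thd.symm) h₁₆).resolve_right hN₁₆
  · have hX : lineMap A B t ≠ B := by simp [hAB, ht₁]
    exact affineSpan_pair_le_of_mem_of_mem (AffineMap.lineMap_mem_affineSpan_pair _ _ _)
      (right_mem_affineSpan_pair _ _ _) <|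
      (mem_affineSpan_pair_or_forall_power_eq hX (hO₂.power_snd.trans hO₅.power_snd.symm)
        (hO₂.power_thd.trans hO₅.power_thd.symm) h₂₅).resolve_right hN₂₅

/- The hypotheses `h153`, ..., `h456` describe the radical centres after circle 4 has been
identified with circle 3. -/
theorem mem_affineSpan_pair_of_radicalCenters (hAB : A ≠ B) (ht₀ : t ≠ 0) (ht₁ : t ≠ 1)
    (hO₁ : IsCircumcircle O₁ R₁ P₁ A B) (hO₂ : IsCircumcircle O₂ R₂ P₅ (lineMap A B t) B)
    (hO₃ : IsCircumcircle O₃ R₃ P₃ (lineMap A B t) A)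
    (hO₅ : IsCircumcircle O₅ R₅ P₂ (lineMap A B t) B) (hO₆ : IsCircumcircle O₆ R₆ P₆ A B)
    (hN₁₆ : ¬ ∀ Y, power Y O₁ R₁ = power Y O₆ R₆) (hN₂₅ : ¬ ∀ Y, power Y O₂ R₂ = power Y O₅ R₅)
    (h153 : power R153 O₁ R₁ = power R153 O₃ R₃ ∧ power R153 O₂ R₂ = power R153 O₃ R₃)
    (h142 : power R142 O₁ R₁ = power R142 O₃ R₃ ∧ power R142 O₅ R₅ = power R142 O₃ R₃)
    (h236 : power R236 O₅ R₅ = power R236 O₃ R₃ ∧ power R236 O₆ R₆ = power R236 O₃ R₃)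
    (h456 : power R456 O₂ R₂ = power R456 O₃ R₃ ∧ power R456 O₆ R₆ = power R456 O₃ R₃) :
    lineMap A B t ∈ line[ℝ, R142, R236] ∧ A ∈ line[ℝ, R153, R142] ∧ A ∈ line[ℝ, R236, R456] := by
  have p₁X := power_lineMap_ne_zero hO₁.power_snd hO₁.power_thd hAB ht₀ ht₁
  have p₆X := power_lineMap_ne_zero hO₆.power_snd hO₆.power_thd hAB ht₀ ht₁
  have onGauss := fun R ↦ eq_lineMap_of_power_eq_of_power_eq (R := R) hAB ht₀ ht₁
    hO₁ hO₂ hO₃ hO₅ hO₆ hN₁₆ hN₂₅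
  refine ⟨?_, ?_, ?_⟩
  · refine mem_affineSpan_pair_of_power_eq (fun h ↦ p₁X ?_) h142.2.symm h236.1.symm
      (hO₃.power_snd.trans hO₅.power_snd.symm)
      (hO₃.power_thd.trans_ne (power_left_ne_zero hO₅.power_snd hO₅.power_thd hAB ht₀ ht₁).symm)
    subst h
    have hX := onGauss R142 h142.2.symm (.inl (by linarith))
    rw [← hX, h142.1, hX, hO₃.power_snd]
  · refine mem_affineSpan_pair_of_power_eq (fun h ↦ p₁X ?_) h153.1 h142.1
      (hO₁.power_snd.trans hO₃.power_thd.symm) (p₁X.trans_eq hO₃.power_snd.symm)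
    subst h
    have hX := onGauss R153 (by linarith) (.inr (by linarith))
    rw [← hX, h153.1, hX, hO₃.power_snd]
  · refine mem_affineSpan_pair_of_power_eq (fun h ↦ p₆X ?_) h236.2.symm h456.2.symm
      (hO₃.power_thd.trans hO₆.power_snd.symm) (hO₃.power_snd.trans_ne p₆X.symm)
    subst h
    have hX := onGauss R236 h236.1.symm (.inr (by linarith))
    rw [← hX, h236.2, hX, hO₃.power_snd]

end SixCircles

theorem stmt_7_general
    (P₁ P₂ P₃ P₄ P₅ P₆ : Pt)
    (h456 : Collinear ℝ ({P₄, P₅, P₆} : Set Pt))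
    (h142 : Collinear ℝ ({P₁, P₄, P₂} : Set Pt))
    (h153 : Collinear ℝ ({P₁, P₅, P₃} : Set Pt))
    (h236 : Collinear ℝ ({P₂, P₃, P₆} : Set Pt))
    (M₂₅ M₆₁ M₄₃ : Pt)
    (hM₂₅ : M₂₅ = midpoint ℝ P₂ P₅)
    (hM₆₁ : M₆₁ = midpoint ℝ P₆ P₁)
    (hM₄₃ : M₄₃ = midpoint ℝ P₄ P₃)
    -- the six circumcircles (each triangle nondegenerate)
    (hT₁ : ¬ Collinear ℝ ({P₁, M₂₅, M₄₃} : Set Pt))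
    (hT₂ : ¬ Collinear ℝ ({P₅, M₆₁, M₄₃} : Set Pt))
    (hT₃ : ¬ Collinear ℝ ({P₃, M₆₁, M₂₅} : Set Pt))
    (O₁ O₂ O₃ O₄ O₅ O₆ : Pt) (R₁ R₂ R₃ R₄ R₅ R₆ : ℝ)
    (hO₁ : IsCircumcircle O₁ R₁ P₁ M₂₅ M₄₃)
    (hO₂ : IsCircumcircle O₂ R₂ P₅ M₆₁ M₄₃)
    (hO₃ : IsCircumcircle O₃ R₃ P₃ M₆₁ M₂₅)
    (hO₄ : IsCircumcircle O₄ R₄ P₄ M₂₅ M₆₁)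
    (hO₅ : IsCircumcircle O₅ R₅ P₂ M₆₁ M₄₃)
    (hO₆ : IsCircumcircle O₆ R₆ P₆ M₂₅ M₄₃)
    -- the four radical centers, each assumed to exist and be unique
    (R153 : Pt)
    (hR153a : power R153 O₁ R₁ = power R153 O₂ R₂)
    (hR153b : power R153 O₂ R₂ = power R153 O₃ R₃)
    (R142 : Pt)
    (hR142a : power R142 O₁ R₁ = power R142 O₄ R₄)
    (hR142b : power R142 O₄ R₄ = power R142 O₅ R₅)
    (R236 : Pt)
    (hR236a : power R236 O₅ R₅ = power R236 O₃ R₃)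
    (hR236b : power R236 O₃ R₃ = power R236 O₆ R₆)
    (R456 : Pt)
    (hR456a : power R456 O₄ R₄ = power R456 O₂ R₂)
    (hR456b : power R456 O₂ R₂ = power R456 O₆ R₆)
    (hR456U : ∀ Y : Pt, power Y O₄ R₄ = power Y O₂ R₂ →
      power Y O₂ R₂ = power Y O₆ R₆ → Y = R456)
    -- hypothesis: M₆₁ lies on the line R₄₅₆R₁₅₃
    (hmem : M₆₁ ∈ affineSpan ℝ ({R456, R153} : Set Pt)) :
    M₆₁ ∈ affineSpan ℝ ({R456, R153} : Set Pt) ∧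
    M₆₁ ∈ affineSpan ℝ ({R142, R236} : Set Pt) ∧
    M₂₅ ∈ affineSpan ℝ ({R153, R142} : Set Pt) ∧
    M₂₅ ∈ affineSpan ℝ ({R236, R456} : Set Pt) := by
  have h25_43 : M₂₅ ≠ M₄₃ := ne₂₃_of_not_collinear hT₁
  have h61_43 : M₆₁ ≠ M₄₃ := ne₂₃_of_not_collinear hT₂
  have h61_25 : M₆₁ ≠ M₂₅ := ne₂₃_of_not_collinear hT₃
  have hcol := collinear_midpoint_diagonals h456 h142 h153 h236
  rw [← hM₂₅, ← hM₆₁, ← hM₄₃] at hcol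
  obtain ⟨t, rfl⟩ := mem_affineSpan_pair_iff_exists_lineMap_eq.1 <|
    hcol.mem_affineSpan_of_mem_of_ne (p₃ := M₆₁) (by simp) (by simp) (by simp) h25_43
  have ht₀ : t ≠ 0 := by rintro rfl; simp at h61_25
  have ht₁ : t ≠ 1 := by rintro rfl; simp at h61_43
  obtain ⟨h₃₄, hR456c, hN₁₆⟩ := forall_power_eq_of_lineMap_mem_affineSpan_pair h25_43 ht₀ ht₁
    hO₁ hO₂ hO₃ hO₄ hO₆ hR153a hR153b hR456a hR456b hR456U hmem
  have ht : 1 < t := one_lt_of_midpoint_eq h25_43 ht₀ ht₁ hO₃.power_snd hO₃.power_thd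
    ((h₃₄ P₄).trans hO₄.power_fst) hO₃.power_fst hM₄₃
  have hN₂₅ : ¬ ∀ Y, power Y O₂ R₂ = power Y O₅ R₅ := fun h ↦ (zero_lt_one.trans ht).not_ge <|
    nonpos_of_midpoint_eq h25_43 ht₁ hO₂.power_snd hO₂.power_thd ((h P₂).trans hO₅.power_fst)
      hO₂.power_fst hM₂₅
  exact ⟨hmem, mem_affineSpan_pair_of_radicalCenters h25_43 ht₀ ht₁ hO₁ hO₂ hO₃ hO₅ hO₆ hN₁₆ hN₂₅
    ⟨hR153a.trans hR153b, hR153b⟩ ⟨hR142a.trans (h₃₄ R142).symm, by linarith [h₃₄ R142]⟩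
    ⟨hR236a, hR236b.symm⟩ ⟨hR456c, by linarith⟩⟩

/-- Gauss line theorem and radical lines 2. -/
theorem stmt_7
    (P₁ P₂ P₃ P₄ P₅ P₆ : Pt)
    (h456 : Collinear ℝ ({P₄, P₅, P₆} : Set Pt))
    (h142 : Collinear ℝ ({P₁, P₄, P₂} : Set Pt))
    (h153 : Collinear ℝ ({P₁, P₅, P₃} : Set Pt))
    (h236 : Collinear ℝ ({P₂, P₃, P₆} : Set Pt))
    (M₂₅ M₆₁ M₄₃ : Pt)
    (hM₂₅ : M₂₅ = midpoint ℝ P₂ P₅)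
    (hM₆₁ : M₆₁ = midpoint ℝ P₆ P₁)
    (hM₄₃ : M₄₃ = midpoint ℝ P₄ P₃)
    -- the six circumcircles (each triangle nondegenerate)
    (hT₁ : ¬ Collinear ℝ ({P₁, M₂₅, M₄₃} : Set Pt))
    (hT₂ : ¬ Collinear ℝ ({P₅, M₆₁, M₄₃} : Set Pt))
    (hT₃ : ¬ Collinear ℝ ({P₃, M₆₁, M₂₅} : Set Pt))
    (hT₄ : ¬ Collinear ℝ ({P₄, M₂₅, M₆₁} : Set Pt))
    (hT₅ : ¬ Collinear ℝ ({P₂, M₆₁, M₄₃} : Set Pt))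
    (hT₆ : ¬ Collinear ℝ ({P₆, M₂₅, M₄₃} : Set Pt))
    (O₁ O₂ O₃ O₄ O₅ O₆ : Pt) (R₁ R₂ R₃ R₄ R₅ R₆ : ℝ)
    (hO₁ : IsCircumcircle O₁ R₁ P₁ M₂₅ M₄₃)
    (hO₂ : IsCircumcircle O₂ R₂ P₅ M₆₁ M₄₃)
    (hO₃ : IsCircumcircle O₃ R₃ P₃ M₆₁ M₂₅)
    (hO₄ : IsCircumcircle O₄ R₄ P₄ M₂₅ M₆₁)
    (hO₅ : IsCircumcircle O₅ R₅ P₂ M₆₁ M₄₃)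
    (hO₆ : IsCircumcircle O₆ R₆ P₆ M₂₅ M₄₃)
    -- the four radical centers, each assumed to exist and be unique
    (R153 : Pt)
    (hR153a : power R153 O₁ R₁ = power R153 O₂ R₂)
    (hR153b : power R153 O₂ R₂ = power R153 O₃ R₃)
    (hR153U : ∀ Y : Pt, power Y O₁ R₁ = power Y O₂ R₂ →
      power Y O₂ R₂ = power Y O₃ R₃ → Y = R153)
    (R142 : Pt)
    (hR142a : power R142 O₁ R₁ = power R142 O₄ R₄)
    (hR142b : power R142 O₄ R₄ = power R142 O₅ R₅)
    (hR142U : ∀ Y : Pt, power Y O₁ R₁ = power Y O₄ R₄ →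
      power Y O₄ R₄ = power Y O₅ R₅ → Y = R142)
    (R236 : Pt)
    (hR236a : power R236 O₅ R₅ = power R236 O₃ R₃)
    (hR236b : power R236 O₃ R₃ = power R236 O₆ R₆)
    (hR236U : ∀ Y : Pt, power Y O₅ R₅ = power Y O₃ R₃ →
      power Y O₃ R₃ = power Y O₆ R₆ → Y = R236)
    (R456 : Pt)
    (hR456a : power R456 O₄ R₄ = power R456 O₂ R₂)
    (hR456b : power R456 O₂ R₂ = power R456 O₆ R₆)
    (hR456U : ∀ Y : Pt, power Y O₄ R₄ = power Y O₂ R₂ →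
      power Y O₂ R₂ = power Y O₆ R₆ → Y = R456)
    -- hypothesis: M₆₁ lies on the line R₄₅₆R₁₅₃
    (hmem : M₆₁ ∈ affineSpan ℝ ({R456, R153} : Set Pt)) :
    M₆₁ ∈ affineSpan ℝ ({R456, R153} : Set Pt) ∧
    M₆₁ ∈ affineSpan ℝ ({R142, R236} : Set Pt) ∧
    M₂₅ ∈ affineSpan ℝ ({R153, R142} : Set Pt) ∧
    M₂₅ ∈ affineSpan ℝ ({R236, R456} : Set Pt) :=
  stmt_7_general P₁ P₂ P₃ P₄ P₅ P₆ h456 h142 h153 h236 M₂₅ M₆₁ M₄₃ hM₂₅ hM₆₁ hM₄₃ hT₁ hT₂ hT₃ O₁ O₂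
    O₃ O₄ O₅ O₆ R₁ R₂ R₃ R₄ R₅ R₆ hO₁ hO₂ hO₃ hO₄ hO₅ hO₆ R153 hR153a hR153b R142 hR142a hR142b R236
    hR236a hR236b R456 hR456a hR456b hR456U hmem

end
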